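/- Let (u_n)_{n≥1} be a sequence of nonnegative reals such that, for some constants C > 0 and α ∈ (0, 1/2), one has u_{a+b} ≤ u_a + u_b + C (1 + a^α + b^α)(1 + u_a^{1/2} + u_b^{1/2}) for all integers a, b ≥ 1. Then u_n = O(n), i.e. there exists C' > 0 with u_n ≤ C' n for all n ≥ 1. -/

import Mathlib

/-!
Fix `γ ∈ (α + 1/2, 1)` and prove the stronger bound `u n ≤ K n - L n^γ` by strong induction,
splitting `n = a + b` with `a = ⌊n/2⌋`. Since the bound gives `u a, u b ≤ K n`, the error term is
at most `9 C √K n^(α + 1/2) ≤ 9 C √K n^γ`, while the concavity of `t ↦ t^γ` makes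
`a^γ + b^γ - n^γ ≥ (1 - γ) n^γ / 3` for such a balanced split. The gain `L (a^γ + b^γ - n^γ)`
absorbs the error once `27 C √K ≤ (1 - γ) L`; with `K = L + |u 1|` (forced by the base case) this
holds for large `L`, as `√K` grows only like `√L`.
-/

open Real

theorem Nat.induction_on_balanced_split {P : ℕ → Prop} (h1 : P 1)
    (hsplit : ∀ a b, 1 ≤ a → a ≤ b → b ≤ 2 * a → P a → P b → P (a + b)) :
    ∀ n, 1 ≤ n → P n := by
  intro n
  induction n using Nat.strong_induction_on with
  | _ n ih =>
    intro hn
    obtain rfl | hn2 := hn.eq_or_lt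
    · exact h1
    · have h := hsplit (n / 2) (n - n / 2) (by omega) (by omega) (by omega)
        (ih _ (by omega) (by omega)) (ih _ (by omega) (by omega))
      rwa [Nat.add_sub_cancel' (Nat.div_le_self n 2)] at h

theorem Real.add_rpow_le_rpow_add_mul_rpow {a b γ : ℝ} (ha : 0 < a) (hab : a ≤ b)
    (hγ₀ : 0 ≤ γ) (hγ₁ : γ ≤ 1) : (a + b) ^ γ ≤ b ^ γ + γ * a ^ γ := by
  have hb : 0 < b := ha.trans_le hab
  have hbern : (1 + a / b) ^ γ ≤ 1 + γ * (a / b) :=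
    rpow_one_add_le_one_add_mul_self (by linarith [div_nonneg ha.le hb.le]) hγ₀ hγ₁
  have hpow : a * b ^ (γ - 1) ≤ a ^ γ := by
    calc a * b ^ (γ - 1) ≤ a * a ^ (γ - 1) :=
          mul_le_mul_of_nonneg_left (rpow_le_rpow_of_nonpos ha hab (by linarith)) ha.le
      _ = a ^ γ := by rw [mul_comm, rpow_sub_one ha.ne', div_mul_cancel₀ _ ha.ne']
  calc (a + b) ^ γ = b ^ γ * (1 + a / b) ^ γ := by
        rw [← mul_rpow hb.le (by positivity), mul_one_add, mul_div_cancel₀ _ hb.ne', add_comm]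
    _ ≤ b ^ γ * (1 + γ * (a / b)) := mul_le_mul_of_nonneg_left hbern (by positivity)
    _ = b ^ γ + γ * (a * b ^ (γ - 1)) := by rw [rpow_sub_one hb.ne']; field_simp
    _ ≤ b ^ γ + γ * a ^ γ := by gcongr

theorem Real.one_sub_mul_add_rpow_div_three_le {a b γ : ℝ} (ha : 0 < a) (hab : a ≤ b)
    (hb : b ≤ 2 * a) (hγ₀ : 0 ≤ γ) (hγ₁ : γ ≤ 1) :
    (1 - γ) * (a + b) ^ γ / 3 ≤ a ^ γ + b ^ γ - (a + b) ^ γ := by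
  have hthird : (a + b) ^ γ ≤ 3 * a ^ γ :=
    calc (a + b) ^ γ ≤ (3 * a) ^ γ := rpow_le_rpow (by linarith) (by linarith) hγ₀
      _ = 3 ^ γ * a ^ γ := mul_rpow (by norm_num) ha.le
      _ ≤ 3 * a ^ γ := by
        gcongr
        exact rpow_le_self_of_one_le (by norm_num) hγ₁
  have hconc := add_rpow_le_rpow_add_mul_rpow ha hab hγ₀ hγ₁
  nlinarith

theorem Real.one_add_sqrt_add_sqrt_le {x y z : ℝ} (hz : 1 ≤ z) (hx : x ≤ z) (hy : y ≤ z) :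
    1 + √x + √y ≤ 3 * √z := by
  have h1 : 1 ≤ √z := one_le_sqrt.mpr hz
  linarith [sqrt_le_sqrt hx, sqrt_le_sqrt hy]

theorem Real.one_add_rpow_add_rpow_le {a b n α : ℝ} (ha : 0 ≤ a) (hb : 0 ≤ b) (han : a ≤ n)
    (hbn : b ≤ n) (hn : 1 ≤ n) (hα : 0 ≤ α) : 1 + a ^ α + b ^ α ≤ 3 * n ^ α := by
  have h1 : 1 ≤ n ^ α := one_le_rpow hn hα
  linarith [rpow_le_rpow ha han hα, rpow_le_rpow hb hbn hα]

theorem Real.rpow_mul_sqrt_le_rpow {n α γ : ℝ} (hn : 1 ≤ n) (h : α + 1 / 2 ≤ γ) :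
    n ^ α * √n ≤ n ^ γ := by
  rw [sqrt_eq_rpow, ← rpow_add (by linarith)]
  exact rpow_le_rpow_of_exponent_le hn h

theorem Real.exists_mul_sqrt_add_le {c M : ℝ} (hc : 0 ≤ c) (hM : 0 ≤ M) :
    ∃ L ≥ 1, c * √(L + M) ≤ L := by
  refine ⟨2 * c ^ 2 + M + 1, by nlinarith, ?_⟩
  nth_rewrite 1 [← sqrt_sq hc]
  rw [← sqrt_mul (sq_nonneg c), sqrt_le_iff]
  constructor
  · positivity
  · nlinarith [sq_nonneg c]

section SubadditiveBound

variable {u : ℕ → ℝ} {C α γ K L : ℝ}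

theorem le_mul_sub_mul_rpow_add_of_balanced (hC : 0 ≤ C) (hα : 0 ≤ α)
    (hαγ : α + 1 / 2 ≤ γ) (hγ : γ ≤ 1) (hK : 1 ≤ K) (hL : 0 ≤ L)
    (hKL : 27 * C * √K ≤ (1 - γ) * L)
    (hrec : ∀ a b : ℕ, 1 ≤ a → 1 ≤ b →
      u (a + b) ≤ u a + u b
        + C * (1 + (a : ℝ) ^ α + (b : ℝ) ^ α) * (1 + √(u a) + √(u b)))
    {a b : ℕ} (ha : 1 ≤ a) (hab : a ≤ b) (hb : b ≤ 2 * a)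
    (iha : u a ≤ K * a - L * (a : ℝ) ^ γ) (ihb : u b ≤ K * b - L * (b : ℝ) ^ γ) :
    u (a + b) ≤ K * (a + b : ℕ) - L * ((a + b : ℕ) : ℝ) ^ γ := by
  push_cast
  have haR : (1 : ℝ) ≤ a := by exact_mod_cast ha
  have habR : (a : ℝ) ≤ b := by exact_mod_cast hab
  have hbR : (b : ℝ) ≤ 2 * a := by exact_mod_cast hb
  set n : ℝ := a + b
  have hn : 1 ≤ n := by linarith
  have hle_Kn : ∀ m : ℕ, (m : ℝ) ≤ n → u m ≤ K * m - L * (m : ℝ) ^ γ → u m ≤ K * n := by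
    intro m hm ih
    have : 0 ≤ L * (m : ℝ) ^ γ := by positivity
    nlinarith
  have herr : (1 + (a : ℝ) ^ α + (b : ℝ) ^ α) * (1 + √(u a) + √(u b)) ≤ 9 * √K * n ^ γ :=
    calc (1 + (a : ℝ) ^ α + (b : ℝ) ^ α) * (1 + √(u a) + √(u b))
        ≤ (3 * n ^ α) * (3 * √(K * n)) :=
          mul_le_mul
            (one_add_rpow_add_rpow_le (by positivity) (by positivity) (by linarith)
              (by linarith) hn hα)
            (one_add_sqrt_add_sqrt_le (by nlinarith) (hle_Kn a (by linarith) iha)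
              (hle_Kn b (by linarith) ihb))
            (by positivity) (by positivity)
      _ = 9 * √K * (n ^ α * √n) := by rw [sqrt_mul (by linarith)]; ring
      _ ≤ 9 * √K * n ^ γ := by gcongr; exact rpow_mul_sqrt_le_rpow hn hαγ
  have hgain := one_sub_mul_add_rpow_div_three_le (by linarith) habR hbR (by linarith) hγ
  have hCerr := mul_le_mul_of_nonneg_left herr hC
  have hLgain := mul_le_mul_of_nonneg_left hgain hL
  have hKL' := mul_le_mul_of_nonneg_right hKL (by positivity : 0 ≤ n ^ γ)
  linarith [hrec a b ha (by omega)]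

theorem le_mul_sub_mul_rpow_of_rec (hC : 0 ≤ C) (hα : 0 ≤ α)
    (hαγ : α + 1 / 2 ≤ γ) (hγ : γ ≤ 1) (hK : 1 ≤ K) (hL : 0 ≤ L)
    (hKL : 27 * C * √K ≤ (1 - γ) * L)
    (hrec : ∀ a b : ℕ, 1 ≤ a → 1 ≤ b →
      u (a + b) ≤ u a + u b
        + C * (1 + (a : ℝ) ^ α + (b : ℝ) ^ α) * (1 + √(u a) + √(u b)))
    (h1 : u 1 ≤ K - L) :
    ∀ n : ℕ, 1 ≤ n → u n ≤ K * n - L * (n : ℝ) ^ γ := by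
  refine Nat.induction_on_balanced_split (by simpa using h1) fun a b ha hab hb iha ihb ↦ ?_
  exact le_mul_sub_mul_rpow_add_of_balanced hC hα hαγ hγ hK hL hKL hrec ha hab hb iha ihb

end SubadditiveBound

theorem subadditive_bound_general (u : ℕ → ℝ)
    (C α : ℝ) (hC : 0 < C) (hα₀ : 0 < α) (hα : α < 1 / 2)
    (hrec : ∀ a b : ℕ, 1 ≤ a → 1 ≤ b →
      u (a + b) ≤ u a + u b
        + C * (1 + (a : ℝ) ^ α + (b : ℝ) ^ α) * (1 + Real.sqrt (u a) + Real.sqrt (u b))) :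
    ∃ C' > (0 : ℝ), ∀ n : ℕ, 1 ≤ n → u n ≤ C' * n := by
  obtain ⟨γ, hαγ, hγ₁⟩ := exists_between (show α + 1 / 2 < 1 by linarith)
  have hγ : 0 < 1 - γ := by linarith
  obtain ⟨L, hL, hLK⟩ := exists_mul_sqrt_add_le (c := 27 * C / (1 - γ)) (by positivity)
    (abs_nonneg (u 1))
  have hKL : 27 * C * √(L + |u 1|) ≤ (1 - γ) * L := by
    rwa [div_mul_eq_mul_div, div_le_iff₀ hγ, mul_comm L] at hLK
  have hbound := le_mul_sub_mul_rpow_of_rec hC.le hα₀.le hαγ.le hγ₁.le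
    (by linarith [abs_nonneg (u 1)]) (by linarith) hKL hrec (by simpa using le_abs_self (u 1))
  refine ⟨L + |u 1|, by positivity, fun n hn ↦ ?_⟩
  have : 0 ≤ L * (n : ℝ) ^ γ := by positivity
  linarith [hbound n hn]

/-- **Lemma (sub-additivity estimate).** Let `(u_n)` be a sequence of nonnegative reals such
that, for some `C > 0` and `α ∈ (0, 1/2)`,
`u_{a+b} ≤ u_a + u_b + C (1 + a^α + b^α)(1 + u_a^{1/2} + u_b^{1/2})` for all `a, b ≥ 1`.
Then `u_n = O(n)`. -/
theorem subadditive_bound (u : ℕ → ℝ) (hu : ∀ n, 0 ≤ u n)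
    (C α : ℝ) (hC : 0 < C) (hα₀ : 0 < α) (hα : α < 1 / 2)
    (hrec : ∀ a b : ℕ, 1 ≤ a → 1 ≤ b →
      u (a + b) ≤ u a + u b
        + C * (1 + (a : ℝ) ^ α + (b : ℝ) ^ α) * (1 + Real.sqrt (u a) + Real.sqrt (u b))) :
    ∃ C' > (0 : ℝ), ∀ n : ℕ, 1 ≤ n → u n ≤ C' * n :=
  subadditive_bound_general u C α hC hα₀ hα hrec
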